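/- arXiv:2510.03499 — 2 statements merged into one kernel-verified Lean document; each statement's English description precedes it below -/
import Mathlib

section
/- Let v be a leaf vertex of a banana tree G with unique neighbor w, let a = |E(v,w)| be the number of edges between v and w, and let G' = G − v. Then f(G, v, 0) = min{1 + f(G', w, 0), a + f(G', w, a)}. -/
open Finset

attribute [local instance] Classical.propDecidable

noncomputable section

/-- A finite loopless multigraph on vertex type `V`, given by a symmetric
edge-multiplicity function: `mul u v` is the number of edges joining `u` and `v`. -/
structure Multigraph (V : Type) [Fintype V] where
  mul : V → V → ℕ
  symm : ∀ u v, mul u v = mul v u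
  loopless : ∀ v, mul v v = 0

namespace Multigraph

variable {V : Type} [Fintype V]

/-- The underlying simple graph of a multigraph. -/
def underlying (G : Multigraph V) : SimpleGraph V where
  Adj u v := 0 < G.mul u v
  symm := by
    constructor
    intro u v h
    rwa [G.symm] at h
  loopless := by
    constructor
    intro v h
    simp [G.loopless] at h

/-- A multigraph is connected if its underlying simple graph is. -/
def Connected (G : Multigraph V) : Prop := G.underlying.Connected

/-- A banana tree is a multigraph whose underlying simple graph is a tree. -/
def IsBananaTree (G : Multigraph V) : Prop := G.underlying.IsTree

/-- The valence (degree) of a vertex. -/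
def valence (G : Multigraph V) (v : V) : ℕ := ∑ w, G.mul v w

/-- The number of edges of a multigraph. -/
def edgeCount (G : Multigraph V) : ℕ := (∑ u, ∑ v, G.mul u v) / 2

/-- The genus (first Betti number) `|E| - |V| + 1` of a connected multigraph. -/
def genus (G : Multigraph V) : ℕ := G.edgeCount + 1 - Fintype.card V

/-- The degree of a divisor: the total number of chips. -/
def degree (D : V → ℤ) : ℤ := ∑ v, D v

/-- A divisor is effective if it is nonnegative everywhere. -/
def Effective (D : V → ℤ) : Prop := ∀ v, 0 ≤ D v

/-- Linear equivalence of divisors: `D'` is obtained from `D` by a finite sequence of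
chip-firing moves, equivalently (for connected graphs) via an integral firing script `σ`. -/
def LinEquiv (G : Multigraph V) (D D' : V → ℤ) : Prop :=
  ∃ σ : V → ℤ, ∀ v, D' v = D v + ∑ w, (G.mul v w : ℤ) * (σ w - σ v)

/-- A divisor has positive rank if for every vertex `v` it is linearly equivalent to an
effective divisor placing at least one chip on `v`. -/
def PosRank (G : Multigraph V) (D : V → ℤ) : Prop :=
  ∀ v, ∃ D', G.LinEquiv D D' ∧ Effective D' ∧ 1 ≤ D' v

/-- The (divisorial) gonality: the minimum degree of a positive-rank effective divisor. -/
def gonality (G : Multigraph V) : ℕ :=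
  sInf {d : ℕ | ∃ D : V → ℤ, Effective D ∧ G.PosRank D ∧ degree D = (d : ℤ)}

/-- `f(G, v, k)`: the minimum degree of an effective divisor `D` on `G` such that
`D + k·v` has positive rank. -/
def fmin (G : Multigraph V) (v : V) (k : ℕ) : ℕ :=
  sInf {d : ℕ | ∃ D : V → ℤ, Effective D ∧
    G.PosRank (fun u => D u + if u = v then (k : ℤ) else 0) ∧ degree D = (d : ℤ)}

/-- Delete a vertex from a multigraph. -/
def deleteVertex (G : Multigraph V) (v : V) : Multigraph {u : V // u ≠ v} where
  mul a b := G.mul a.1 b.1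
  symm := fun a b => G.symm a.1 b.1
  loopless := fun a => G.loopless a.1

/-- Delete one single edge between `u` and `w` (if any) from a multigraph. -/
def deleteOneEdge (G : Multigraph V) (u w : V) : Multigraph V where
  mul x y := if (x = u ∧ y = w) ∨ (x = w ∧ y = u) then G.mul x y - 1 else G.mul x y
  symm := by
    intro x y
    by_cases h : (x = u ∧ y = w) ∨ (x = w ∧ y = u)
    · have h' : (y = u ∧ x = w) ∨ (y = w ∧ x = u) := by tauto
      simp [h, h', G.symm x y]
    · have h' : ¬((y = u ∧ x = w) ∨ (y = w ∧ x = u)) := by tauto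
      simp [h, h', G.symm x y]
  loopless := by
    intro v
    by_cases h : (v = u ∧ v = w) ∨ (v = w ∧ v = u)
    · simp [h, G.loopless]
    · simp [h, G.loopless]

/-- The adjacency move from `v` to `w` on a banana tree: the subset-firing move at the
connected component of `v` after removing the `v`-`w` edge bunch.  Its net effect is to
move `|E(v,w)|` chips from `v` to `w`. -/
def adjMove (G : Multigraph V) (v w : V) (D : V → ℤ) : V → ℤ :=
  fun u => if u = v then D u - (G.mul v w : ℤ)
    else if u = w then D u + (G.mul v w : ℤ) else D u

/-- A single legal adjacency move: both divisors are effective and the second is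
obtained from the first by an adjacency move between adjacent vertices. -/
def LegalAdjStep (G : Multigraph V) (D D' : V → ℤ) : Prop :=
  ∃ v w, G.underlying.Adj v w ∧ Effective D ∧ Effective D' ∧ D' = G.adjMove v w D

/-- A scramble: a collection of nonempty vertex sets (eggs), each inducing a connected
subgraph. -/
def IsScramble (G : Multigraph V) (S : Finset (Finset V)) : Prop :=
  ∀ X ∈ S, X.Nonempty ∧ (G.underlying.induce (X : Set V)).Connected

/-- A hitting set of a scramble: a set of vertices meeting every egg. -/
def IsHittingSet (S : Finset (Finset V)) (T : Finset V) : Prop :=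
  ∀ X ∈ S, (X ∩ T).Nonempty

/-- The hitting number of a scramble. -/
def hittingNumber (S : Finset (Finset V)) : ℕ∞ :=
  sInf {t : ℕ∞ | ∃ T : Finset V, IsHittingSet S T ∧ (T.card : ℕ∞) = t}

/-- The simple graph remaining after removing `c u w` of the edges of each bunch. -/
def cutGraph (G : Multigraph V) (c : V → V → ℕ) : SimpleGraph V where
  Adj u w := u ≠ w ∧ c u w < G.mul u w ∧ c w u < G.mul w u
  symm := ⟨fun u w h => ⟨h.1.symm, h.2.2, h.2.1⟩⟩
  loopless := ⟨fun u h => h.1 rfl⟩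

/-- `c` describes an egg-cut of the scramble `S`: a set of edges of `G` (given by the
number `c u w` of edges removed from each bunch) whose removal leaves at least two
connected components each completely containing an egg. -/
def IsEggCut (G : Multigraph V) (S : Finset (Finset V)) (c : V → V → ℕ) : Prop :=
  (∀ u w, c u w = c w u) ∧ (∀ u w, c u w ≤ G.mul u w) ∧
  ∃ X₁ ∈ S, ∃ X₂ ∈ S,
    (∀ x ∈ X₁, ∀ y ∈ X₁, (G.cutGraph c).Reachable x y) ∧
    (∀ x ∈ X₂, ∀ y ∈ X₂, (G.cutGraph c).Reachable x y) ∧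
    (∀ x ∈ X₁, ∀ y ∈ X₂, ¬ (G.cutGraph c).Reachable x y)

/-- The egg-cut number of a scramble (`⊤` if no egg-cut exists). -/
def eggCutNumber (G : Multigraph V) (S : Finset (Finset V)) : ℕ∞ :=
  sInf {t : ℕ∞ | ∃ c : V → V → ℕ, G.IsEggCut S c ∧
    ((∑ u, ∑ w, c u w : ℕ) : ℕ∞) = 2 * t}

/-- The order of a scramble: the minimum of its hitting number and egg-cut number. -/
def scrambleOrder (G : Multigraph V) (S : Finset (Finset V)) : ℕ∞ :=
  min (hittingNumber S) (G.eggCutNumber S)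

/-- The scramble number of a multigraph: the maximum order of a scramble on it. -/
def scrambleNumber (G : Multigraph V) : ℕ∞ :=
  sSup {m : ℕ∞ | ∃ S : Finset (Finset V), G.IsScramble S ∧ G.scrambleOrder S = m}

/-- The weight of a node `t` in a tree-cut decomposition `(T, X)`: the number of vertices
mapped to `t` plus the number of edges routed through `t` with neither endpoint mapped
to `t`. -/
def nodeWeight (G : Multigraph V) {N : Type} [Fintype N] (T : SimpleGraph N)
    (X : V → N) (t : N) : ℕ :=
  (Finset.univ.filter fun v => X v = t).card +
    (∑ u, ∑ w, if X u ≠ t ∧ X w ≠ t ∧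
        ¬ (T.deleteEdges {e | t ∈ e}).Reachable (X u) (X w)
      then G.mul u w else 0) / 2

/-- The weight of a link `pq` in a tree-cut decomposition `(T, X)`: the number of edges
of `G` routed through that link. -/
def linkWeight (G : Multigraph V) {N : Type} (T : SimpleGraph N)
    (X : V → N) (p q : N) : ℕ :=
  (∑ u, ∑ w, if ¬ (T.deleteEdges {s(p, q)}).Reachable (X u) (X w)
    then G.mul u w else 0) / 2

/-- The width of a tree-cut decomposition `(T, X)`: the maximum of all node and link
weights. -/
def tcdWidth (G : Multigraph V) {N : Type} [Fintype N] (T : SimpleGraph N)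
    (X : V → N) : ℕ :=
  max (Finset.univ.sup fun t => G.nodeWeight T X t)
      (Finset.univ.sup fun p : N × N =>
        if T.Adj p.1 p.2 then G.linkWeight T X p.1 p.2 else 0)

/-- The screewidth of a multigraph: the minimum width of a tree-cut decomposition. -/
def screewidth (G : Multigraph V) : ℕ :=
  sInf {w : ℕ | ∃ (m : ℕ) (T : SimpleGraph (Fin m)), T.IsTree ∧
    ∃ X : V → Fin m, G.tcdWidth T X = w}

/-- The banana path on `n+1` vertices `v_0, …, v_n`, with `a i` edges joining
`v_i` and `v_{i+1}` (for `0 ≤ i < n`). -/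
def bananaPath (n : ℕ) (a : ℕ → ℕ) : Multigraph (Fin (n + 1)) where
  mul i j := if i.val + 1 = j.val then a i.val else if j.val + 1 = i.val then a j.val else 0
  symm := by
    intro u v
    try dsimp only
    split_ifs <;> first | rfl | (exfalso; omega)
  loopless := by
    intro v
    have h : ¬ (v.val + 1 = v.val) := by omega
    simp [h]

/-- The banana star with central vertex `Sum.inl ()` and, for each `i : Fin k`,
`r i` leaves joined to the center by `a i` parallel edges. -/
def bananaStar (k : ℕ) (a r : Fin k → ℕ) :
    Multigraph (Unit ⊕ (Σ i : Fin k, Fin (r i))) where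
  mul x y :=
    match x, y with
    | Sum.inl _, Sum.inr ⟨i, _⟩ => a i
    | Sum.inr ⟨i, _⟩, Sum.inl _ => a i
    | _, _ => 0
  symm := by
    intro u v
    rcases u with u | ⟨i, li⟩ <;> rcases v with v | ⟨j, lj⟩ <;> rfl
  loopless := by
    intro v
    rcases v with v | ⟨i, li⟩ <;> rfl

end Multigraph

/-! Removing a leaf `v` with unique neighbour `w` and `a = |E(v,w)|` edges: chips on `v` can only
move in multiples of `a`, by firing `v`. A positive-rank divisor on `G` may be taken with a chip on
`v`; if it has at least `a` chips there, merging `v` into `w` gives a divisor on `G - v` with at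
least `a` chips on `w`, and otherwise the number of chips on `v` never drops, so one of them is
spare and can be removed after merging. Conversely a divisor on `G - v` extends to `G` by putting
one chip on `v`, or `a` chips on `v` in exchange for `a` chips on `w`. -/

namespace Multigraph

variable {V : Type}

def addAt (x : V) (c : ℤ) (D : V → ℤ) : V → ℤ := fun u => D u + if u = x then c else 0

lemma addAt_zero (x : V) (D : V → ℤ) : addAt x 0 D = D := by
  funext u
  simp [addAt]

lemma addAt_addAt (x : V) (c d : ℤ) (D : V → ℤ) :
    addAt x c (addAt x d D) = addAt x (d + c) D := by
  funext u
  simp only [addAt]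
  split_ifs <;> ring

def extend (v : V) (c : ℤ) (D : {u // u ≠ v} → ℤ) : V → ℤ := fun u =>
  if h : u = v then c else D ⟨u, h⟩

def mergeInto (v w : V) (D : V → ℤ) : {u // u ≠ v} → ℤ := fun x => addAt w (D v) D x

@[simp] lemma extend_self {v : V} (c : ℤ) (D : {u // u ≠ v} → ℤ) : extend v c D v = c :=
  dif_pos rfl

lemma extend_of_ne {v : V} (c : ℤ) (D : {u // u ≠ v} → ℤ) {u : V} (hu : u ≠ v) :
    extend v c D u = D ⟨u, hu⟩ := dif_neg hu

@[simp] lemma extend_val {v : V} (c : ℤ) (D : {u // u ≠ v} → ℤ) (x : {u // u ≠ v}) :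
    extend v c D x = D x := dif_neg x.2

lemma apply_le_addAt_mergeInto {v w : V} (hne : w ≠ v) {E : V → ℤ} {c : ℤ} (hc : c ≤ E v)
    (x : {u // u ≠ v}) : E x ≤ addAt ⟨w, hne⟩ (-c) (mergeInto v w E) x := by
  simp only [addAt, mergeInto, Subtype.ext_iff]
  split_ifs <;> linarith

lemma Effective.addAt_neg {x : V} {c : ℤ} {D : V → ℤ} (hD : Effective D) (hc : c ≤ D x) :
    Effective (addAt x (-c) D) := fun u => by
  simp only [addAt]
  split_ifs with hu
  · subst hu; linarith
  · linarith [hD u]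

lemma Effective.extend {v : V} {c : ℤ} {D : {u // u ≠ v} → ℤ} (hc : 0 ≤ c)
    (hD : Effective D) : Effective (extend v c D) := fun u => by
  rcases eq_or_ne u v with rfl | hu
  · simpa
  · rw [extend_of_ne _ _ hu]
    exact hD _

lemma Effective.addAt_mergeInto {v w : V} (hne : w ≠ v) {E : V → ℤ} {c : ℤ}
    (hE : Effective E) (hc : c ≤ E v) :
    Effective (addAt ⟨w, hne⟩ (-c) (mergeInto v w E)) := fun x =>
  (hE x).trans (apply_le_addAt_mergeInto hne hc x)

variable [Fintype V]

lemma degree_addAt (x : V) (c : ℤ) (D : V → ℤ) : degree (addAt x c D) = degree D + c := by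
  simp [degree, addAt, sum_add_distrib]

namespace LinEquiv

variable {G : Multigraph V} {D E F : V → ℤ}

protected lemma refl (G : Multigraph V) (D : V → ℤ) : G.LinEquiv D D :=
  ⟨0, by simp⟩

protected lemma symm (h : G.LinEquiv D E) : G.LinEquiv E D := by
  obtain ⟨σ, hσ⟩ := h
  refine ⟨-σ, fun u => ?_⟩
  have h₀ : ∑ x, (G.mul u x : ℤ) * (σ x - σ u) +
      ∑ x, (G.mul u x : ℤ) * ((-σ) x - (-σ) u) = 0 := by
    rw [← sum_add_distrib]
    exact sum_eq_zero fun x _ => by simp only [Pi.neg_apply]; ring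
  linarith [hσ u]

protected lemma trans (h₁ : G.LinEquiv D E) (h₂ : G.LinEquiv E F) : G.LinEquiv D F := by
  obtain ⟨σ, hσ⟩ := h₁
  obtain ⟨τ, hτ⟩ := h₂
  refine ⟨σ + τ, fun u => ?_⟩
  simp only [hτ u, hσ u, Pi.add_apply, add_assoc, ← sum_add_distrib, ← mul_add]
  congr 2 with x
  ring

protected lemma addAt (h : G.LinEquiv D E) (x : V) (c : ℤ) :
    G.LinEquiv (addAt x c D) (addAt x c E) := by
  obtain ⟨σ, hσ⟩ := h
  exact ⟨σ, fun u => by simp only [Multigraph.addAt, hσ u]; ring⟩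

lemma degree_eq (h : G.LinEquiv D E) : degree E = degree D := by
  obtain ⟨σ, hσ⟩ := h
  -- the firing flow is antisymmetric in the two endpoints of an edge
  have hS : ∑ u, ∑ x, (G.mul u x : ℤ) * (σ x - σ u) =
      -∑ u, ∑ x, (G.mul u x : ℤ) * (σ x - σ u) := by
    conv_lhs => rw [Finset.sum_comm]
    simp only [← sum_neg_distrib]
    refine sum_congr rfl fun u _ => sum_congr rfl fun x _ => ?_
    rw [G.symm]
    ring
  simp only [degree, hσ, sum_add_distrib]
  linarith

end LinEquiv

lemma PosRank.of_linEquiv {G : Multigraph V} {D E : V → ℤ} (h : G.PosRank D)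
    (hDE : G.LinEquiv D E) : G.PosRank E := fun u =>
  let ⟨F, hDF, hF, hFu⟩ := h u
  ⟨F, hDE.symm.trans hDF, hF, hFu⟩

lemma exists_fmin (G : Multigraph V) (x : V) (k : ℕ) :
    ∃ D, Effective D ∧ (k : ℤ) ≤ D x ∧ G.PosRank D ∧ degree D = G.fmin x k + k := by
  have hk : (0 : ℤ) ≤ k := Nat.cast_nonneg k
  have hne : {d : ℕ | ∃ D : V → ℤ, Effective D ∧ G.PosRank (addAt x k D) ∧
      degree D = d}.Nonempty := by
    refine ⟨Fintype.card V, fun _ => 1, fun _ => zero_le_one, fun u => ?_, by simp [degree]⟩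
    refine ⟨_, .refl _ _, fun t => ?_, ?_⟩ <;> simp only [addAt] <;> split_ifs <;> omega
  obtain ⟨D, hD, hpos, hdeg⟩ := Nat.sInf_mem hne
  refine ⟨addAt x k D, fun u => ?_, ?_, hpos, by rw [degree_addAt, hdeg]; rfl⟩
  · simp only [addAt]; split_ifs <;> linarith [hD u]
  · simp only [addAt]; split_ifs <;> linarith [hD x]

lemma fmin_add_le {G : Multigraph V} {x : V} {k : ℕ} {D : V → ℤ} (hD : Effective D)
    (hk : (k : ℤ) ≤ D x) (h : G.PosRank D) : (G.fmin x k + k : ℤ) ≤ degree D := by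
  set D' := addAt x (-k) D
  have hD' : Effective D' := hD.addAt_neg hk
  have hdeg : degree D' = degree D - k := by rw [degree_addAt]; ring
  have hdeg₀ : 0 ≤ degree D' := sum_nonneg fun u _ => hD' u
  have hpos : G.PosRank (addAt x k D') := by rwa [addAt_addAt, neg_add_cancel, addAt_zero]
  have : G.fmin x k ≤ (degree D').toNat :=
    Nat.sInf_le ⟨D', hD', hpos, (Int.toNat_of_nonneg hdeg₀).symm⟩
  omega

section Leaf

variable {G : Multigraph V} {v w : V}

lemma mul_eq_zero_of_leaf (hleaf : ∀ u, G.underlying.Adj v u → u = w) {u : V} (hu : u ≠ w) :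
    G.mul u v = 0 := by
  rw [G.symm]
  by_contra h
  exact hu (hleaf u (Nat.pos_of_ne_zero h))

lemma sum_mul_of_leaf (hleaf : ∀ u, G.underlying.Adj v u → u = w) (f : V → ℤ) :
    ∑ x, (G.mul v x : ℤ) * f x = G.mul v w * f w :=
  Fintype.sum_eq_single w fun x hx => by rw [G.symm, mul_eq_zero_of_leaf hleaf hx]; simp

lemma degree_extend (c : ℤ) (D : {u // u ≠ v} → ℤ) :
    degree (extend v c D) = degree D + c := by
  rw [degree, Fintype.sum_eq_add_sum_subtype_ne _ v]
  simp [degree, add_comm]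

lemma degree_mergeInto (hne : w ≠ v) (D : V → ℤ) : degree (mergeInto v w D) = degree D := by
  have h := Fintype.sum_eq_add_sum_subtype_ne (addAt w (D v) D) v
  have hv : addAt w (D v) D v = D v := by simp [addAt, hne.symm]
  have hdeg := degree_addAt w (D v) D
  rw [hv] at h
  unfold degree at hdeg ⊢
  change ∑ x : {u // u ≠ v}, addAt w (D v) D x = _
  linarith

lemma LinEquiv.mergeInto (hleaf : ∀ u, G.underlying.Adj v u → u = w) {D E : V → ℤ}
    (h : G.LinEquiv D E) : (G.deleteVertex v).LinEquiv (mergeInto v w D) (mergeInto v w E) := by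
  obtain ⟨σ, hσ⟩ := h
  refine ⟨fun x => σ x, fun x => ?_⟩
  have hx := hσ x
  have hv := hσ v
  rw [Fintype.sum_eq_add_sum_subtype_ne _ v] at hx
  rw [sum_mul_of_leaf hleaf] at hv
  simp only [Multigraph.mergeInto, addAt, deleteVertex]
  split_ifs with hxw
  · rw [hxw, G.symm] at hx
    rw [hxw]
    linarith
  · rw [mul_eq_zero_of_leaf hleaf hxw, Nat.cast_zero, zero_mul, zero_add] at hx
    linarith

lemma LinEquiv.extend (hleaf : ∀ u, G.underlying.Adj v u → u = w) (hne : w ≠ v)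
    {D E : {u // u ≠ v} → ℤ} (h : (G.deleteVertex v).LinEquiv D E) (c : ℤ) :
    G.LinEquiv (extend v c D) (extend v c E) := by
  obtain ⟨σ, hσ⟩ := h
  -- `v` fires together with `w`, so no chips cross the bunch between them
  refine ⟨Multigraph.extend v (σ ⟨w, hne⟩) σ, fun u => ?_⟩
  rcases eq_or_ne u v with rfl | hu
  · simp [sum_mul_of_leaf hleaf, extend_of_ne _ _ hne]
  · have hbunch : (G.mul u v : ℤ) * (σ ⟨w, hne⟩ - σ ⟨u, hu⟩) = 0 := by
      rcases eq_or_ne u w with rfl | huw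
      · simp
      · simp [mul_eq_zero_of_leaf hleaf huw]
    rw [Fintype.sum_eq_add_sum_subtype_ne _ v]
    simp only [extend_self, extend_of_ne _ _ hu, extend_val, hbunch, zero_add]
    exact hσ ⟨u, hu⟩

lemma linEquiv_extend_add_mul (hleaf : ∀ u, G.underlying.Adj v u → u = w) (hne : w ≠ v)
    (c : ℤ) (D : {u // u ≠ v} → ℤ) :
    G.LinEquiv (extend v (c + G.mul v w) D) (extend v c (addAt ⟨w, hne⟩ (G.mul v w) D)) := by
  refine ⟨extend v 1 0, fun u => ?_⟩
  rcases eq_or_ne u v with rfl | hu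
  · simp [sum_mul_of_leaf hleaf, extend_of_ne _ _ hne]
  · rw [Fintype.sum_eq_add_sum_subtype_ne _ v]
    simp only [extend_self, extend_of_ne _ _ hu, extend_val, Pi.zero_apply, sub_self, mul_zero,
      sum_const_zero, add_zero, sub_zero, mul_one, addAt, Subtype.ext_iff]
    rcases eq_or_ne u w with rfl | huw
    · simp [G.symm]
    · simp [huw, mul_eq_zero_of_leaf hleaf huw]

lemma LinEquiv.apply_le_of_leaf (hleaf : ∀ u, G.underlying.Adj v u → u = w) {D E : V → ℤ}
    (h : G.LinEquiv D E) (hE : 0 ≤ E v) (hD : D v < G.mul v w) : D v ≤ E v := by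
  obtain ⟨σ, hσ⟩ := h
  have hv := hσ v
  rw [sum_mul_of_leaf hleaf] at hv
  -- `E v - D v` is a multiple of `|E(v,w)|`, so it cannot be negative
  rcases le_or_gt 0 (σ w - σ v) with hσ₀ | hσ₀
  · nlinarith
  · nlinarith [Int.add_one_le_iff.mpr hσ₀]

lemma posRank_of_linEquiv_extend (hleaf : ∀ u, G.underlying.Adj v u → u = w) (hne : w ≠ v)
    {D' : V → ℤ} {D : {u // u ≠ v} → ℤ} {c : ℤ} (hD' : Effective D') (hv : 1 ≤ D' v)
    (hc : 0 ≤ c) (hlin : G.LinEquiv D' (extend v c D)) (h : (G.deleteVertex v).PosRank D) :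
    G.PosRank D' := by
  intro u
  rcases eq_or_ne u v with rfl | hu
  · exact ⟨D', .refl _ _, hD', hv⟩
  · obtain ⟨F, hDF, hF, hFu⟩ := h ⟨u, hu⟩
    exact ⟨extend v c F, hlin.trans (hDF.extend hleaf hne c), hF.extend hc,
      by rwa [extend_of_ne _ _ hu]⟩

lemma PosRank.addAt_mergeInto (hleaf : ∀ u, G.underlying.Adj v u → u = w) (hne : w ≠ v)
    {E : V → ℤ} {c : ℤ} (h : G.PosRank E)
    (hc : ∀ F, G.LinEquiv E F → Effective F → c ≤ F v) :
    (G.deleteVertex v).PosRank (addAt ⟨w, hne⟩ (-c) (mergeInto v w E)) := by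
  intro x
  obtain ⟨F, hEF, hF, hFx⟩ := h x
  have hcF := hc F hEF hF
  exact ⟨_, (hEF.mergeInto hleaf).addAt _ _, hF.addAt_mergeInto hne hcF,
    hFx.trans (apply_le_addAt_mergeInto hne hcF x)⟩

lemma fmin_le_one_add_fmin_deleteVertex (hleaf : ∀ u, G.underlying.Adj v u → u = w)
    (hne : w ≠ v) : G.fmin v 0 ≤ 1 + (G.deleteVertex v).fmin ⟨w, hne⟩ 0 := by
  obtain ⟨D, hD, -, hpos, hdeg⟩ := (G.deleteVertex v).exists_fmin ⟨w, hne⟩ 0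
  have hD₁ : Effective (extend v 1 D) := hD.extend zero_le_one
  have hpos₁ : G.PosRank (extend v 1 D) :=
    posRank_of_linEquiv_extend hleaf hne hD₁ (by simp) zero_le_one (.refl _ _) hpos
  have h := fmin_add_le (x := v) (k := 0) hD₁ (by simp) hpos₁
  rw [degree_extend, hdeg] at h
  omega

lemma fmin_le_mul_add_fmin_deleteVertex (hvw : G.underlying.Adj v w)
    (hleaf : ∀ u, G.underlying.Adj v u → u = w) (hne : w ≠ v) :
    G.fmin v 0 ≤ G.mul v w + (G.deleteVertex v).fmin ⟨w, hne⟩ (G.mul v w) := by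
  have ha : 0 < G.mul v w := hvw
  obtain ⟨D, hD, hDw, hpos, hdeg⟩ := (G.deleteVertex v).exists_fmin ⟨w, hne⟩ (G.mul v w)
  set D₀ := addAt ⟨w, hne⟩ (-G.mul v w) D
  have hD₀ : Effective (extend v (G.mul v w) D₀) :=
    (hD.addAt_neg hDw).extend (Nat.cast_nonneg _)
  have hfire : G.LinEquiv (extend v (G.mul v w) D₀) (extend v 0 D) := by
    simpa only [D₀, zero_add, addAt_addAt, neg_add_cancel, addAt_zero] using
      linEquiv_extend_add_mul hleaf hne 0 D₀
  have hpos₀ : G.PosRank (extend v (G.mul v w) D₀) :=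
    posRank_of_linEquiv_extend hleaf hne hD₀ (by simp; omega) le_rfl hfire hpos
  have h := fmin_add_le (x := v) (k := 0) hD₀ (by simp) hpos₀
  rw [degree_extend, degree_addAt, hdeg] at h
  omega

lemma min_le_fmin (hleaf : ∀ u, G.underlying.Adj v u → u = w) (hne : w ≠ v) :
    min (1 + (G.deleteVertex v).fmin ⟨w, hne⟩ 0)
      (G.mul v w + (G.deleteVertex v).fmin ⟨w, hne⟩ (G.mul v w)) ≤ G.fmin v 0 := by
  obtain ⟨D, -, -, hDpos, hDdeg⟩ := G.exists_fmin v 0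
  obtain ⟨E, hDE, hE, hEv⟩ := hDpos v
  have hEpos : G.PosRank E := hDpos.of_linEquiv hDE
  have hEdeg : degree (mergeInto v w E) = G.fmin v 0 := by
    rw [degree_mergeInto hne, hDE.degree_eq, hDdeg, Nat.cast_zero, add_zero]
  by_cases hEva : (G.mul v w : ℤ) ≤ E v
  · have hpos : (G.deleteVertex v).PosRank (mergeInto v w E) := by
      simpa only [neg_zero, addAt_zero] using
        hEpos.addAt_mergeInto hleaf hne (c := 0) fun F _ hF => hF v
    have hw : (G.mul v w : ℤ) ≤ mergeInto v w E ⟨w, hne⟩ := by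
      simp only [mergeInto, addAt, if_pos]
      linarith [hE w]
    have hE₀ := hE.addAt_mergeInto hne (hE v)
    rw [neg_zero, addAt_zero] at hE₀
    have h := fmin_add_le hE₀ hw hpos
    omega
  · have hrigid : ∀ F, G.LinEquiv E F → Effective F → 1 ≤ F v := fun F hEF hF =>
      hEv.trans (hEF.apply_le_of_leaf hleaf (hF v) (by omega))
    have hE₁ := hE.addAt_mergeInto hne hEv
    have h := fmin_add_le (x := ⟨w, hne⟩) (k := 0) hE₁ (hE₁ _)
      (hEpos.addAt_mergeInto hleaf hne hrigid)
    rw [degree_addAt, hEdeg] at h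
    omega

end Leaf

end Multigraph

open Multigraph in
theorem fmin_leaf_recursion_zero_general
    {V : Type} [Fintype V] (G : Multigraph V)
    (v w : V) (hvw : G.underlying.Adj v w)
    (hleaf : ∀ u, G.underlying.Adj v u → u = w)
    (hne : w ≠ v) (a : ℕ) (ha : a = G.mul v w) :
    G.fmin v 0 = min (1 + (G.deleteVertex v).fmin ⟨w, hne⟩ 0)
                     (a + (G.deleteVertex v).fmin ⟨w, hne⟩ a) := by
  subst ha
  exact le_antisymm
    (le_min (fmin_le_one_add_fmin_deleteVertex hleaf hne)
      (fmin_le_mul_add_fmin_deleteVertex hvw hleaf hne))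
    (min_le_fmin hleaf hne)

open Multigraph in
/-- For a leaf `v` of a banana tree `G` with unique neighbor `w`,
`a = |E(v,w)|` and `G' = G - v`, we have
`f(G, v, 0) = min { 1 + f(G', w, 0), a + f(G', w, a) }`. -/
theorem fmin_leaf_recursion_zero
    {V : Type} [Fintype V] (G : Multigraph V) (hG : G.IsBananaTree)
    (v w : V) (hvw : G.underlying.Adj v w)
    (hleaf : ∀ u, G.underlying.Adj v u → u = w)
    (hne : w ≠ v) (a : ℕ) (ha : a = G.mul v w) :
    G.fmin v 0 = min (1 + (G.deleteVertex v).fmin ⟨w, hne⟩ 0)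
                     (a + (G.deleteVertex v).fmin ⟨w, hne⟩ a) :=
  fmin_leaf_recursion_zero_general G v w hvw hleaf hne a ha
end
end

section
/- Let G be a finite connected loopless multigraph whose underlying simple graph contains a cycle, and let v, w be adjacent vertices lying on that cycle with a = |E(v,w)| edges between them in G. Then the divisor a·v is not linearly equivalent to the divisor a·w. -/
open Finset

attribute [local instance] Classical.propDecidable

noncomputable section

/-!
Write `a·v - a·w` as the Laplacian of a firing script `σ` and let `A` be the set where `σ` is
maximal. Summed over `A`, the Laplacian is at least the number of edges leaving `A`, while the
divisor sums to `a[v ∈ A] - a[w ∈ A]`. The vertex `w` loses chips, so it is not a maximum of `σ`;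
by connectivity some edge leaves `A`, which forces `v ∈ A`. But then the `a` edges `vw` and one
more edge of the cycle through `vw` leave `A`, so `a + 1 ≤ a`.
-/

theorem SimpleGraph.Reachable.exists_adj_mem_not_mem {W : Type} {H : SimpleGraph W} {u t : W}
    (h : H.Reachable u t) {A : Set W} (hu : u ∈ A) (ht : t ∉ A) :
    ∃ a b, H.Adj a b ∧ a ∈ A ∧ b ∉ A := by
  obtain ⟨p⟩ := h
  obtain ⟨d, -, hd⟩ := p.exists_boundary_dart A hu ht
  exact ⟨d.fst, d.snd, d.adj, hd⟩

namespace Multigraph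

variable {V : Type} [Fintype V] (G : Multigraph V)

def laplacian (σ : V → ℤ) (u : V) : ℤ := ∑ t, (G.mul u t : ℤ) * (σ u - σ t)

def cut (A : Finset V) : ℤ := ∑ p ∈ A ×ˢ Aᶜ, (G.mul p.1 p.2 : ℤ)

variable {G}

theorem LinEquiv.exists_laplacian_eq {D D' : V → ℤ} (h : G.LinEquiv D D') :
    ∃ σ : V → ℤ, ∀ u, G.laplacian σ u = D u - D' u := by
  obtain ⟨σ, hσ⟩ := h
  refine ⟨σ, fun u => ?_⟩
  have hneg : G.laplacian σ u = -∑ t, (G.mul u t : ℤ) * (σ t - σ u) := by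
    rw [laplacian, ← Finset.sum_neg_distrib]
    exact Finset.sum_congr rfl fun t _ => by ring
  rw [hneg, hσ u]
  ring

theorem laplacian_nonneg_of_forall_le {σ : V → ℤ} {u : V} (hu : ∀ t, σ t ≤ σ u) :
    0 ≤ G.laplacian σ u :=
  Finset.sum_nonneg fun t _ => mul_nonneg (Int.natCast_nonneg _) (sub_nonneg.2 (hu t))

theorem cut_le_sum_laplacian {σ : V → ℤ} {A : Finset V} (hmax : ∀ u ∈ A, ∀ t, σ t ≤ σ u)
    (hlt : ∀ u ∈ A, ∀ t ∉ A, σ t < σ u) :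
    G.cut A ≤ ∑ u ∈ A, G.laplacian σ u := by
  rw [cut, Finset.sum_product]
  refine Finset.sum_le_sum fun u hu => ?_
  calc ∑ t ∈ Aᶜ, (G.mul u t : ℤ)
      ≤ ∑ t ∈ Aᶜ, (G.mul u t : ℤ) * (σ u - σ t) := by
        refine Finset.sum_le_sum fun t ht => le_mul_of_one_le_right (Int.natCast_nonneg _) ?_
        linarith [hlt u hu t (Finset.mem_compl.1 ht)]
    _ ≤ G.laplacian σ u :=
        Finset.sum_le_sum_of_subset_of_nonneg (Finset.subset_univ _) fun t _ _ =>
          mul_nonneg (Int.natCast_nonneg _) (sub_nonneg.2 (hmax u hu t))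

theorem mul_le_cut {A : Finset V} {u t : V} (hu : u ∈ A) (ht : t ∉ A) :
    (G.mul u t : ℤ) ≤ G.cut A :=
  Finset.single_le_sum (f := fun p : V × V => (G.mul p.1 p.2 : ℤ)) (a := (u, t))
    (fun _ _ => Int.natCast_nonneg _) (Finset.mem_product.2 ⟨hu, Finset.mem_compl.2 ht⟩)

theorem one_le_cut (hG : G.Connected) {A : Finset V} {u t : V} (hu : u ∈ A) (ht : t ∉ A) :
    1 ≤ G.cut A := by
  obtain ⟨a, b, hab, ha, hb⟩ := SimpleGraph.Reachable.exists_adj_mem_not_mem (hG.preconnected u t)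
    (A := (A : Set V)) hu ht
  have hpos : (1 : ℤ) ≤ G.mul a b := by exact_mod_cast (hab : 0 < G.mul a b)
  exact hpos.trans (mul_le_cut ha hb)

/-- An edge on a cycle is not a bridge, so a set separating its ends is left by another edge. -/
theorem mul_add_one_le_cut_of_mem_cycle {x v w : V} {c : G.underlying.Walk x x}
    (hc : c.IsCycle) (hvw : s(v, w) ∈ c.edges) {A : Finset V} (hv : v ∈ A) (hw : w ∉ A) :
    (G.mul v w : ℤ) + 1 ≤ G.cut A := by
  have hreach : (G.underlying.deleteEdges {s(v, w)}).Reachable v w :=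
    (SimpleGraph.adj_and_reachable_delete_edges_iff_exists_cycle.2 ⟨x, c, hc, hvw⟩).2
  obtain ⟨a, b, hab, ha, hb⟩ := hreach.exists_adj_mem_not_mem (A := (A : Set V)) hv hw
  rw [SimpleGraph.deleteEdges_adj, Set.mem_singleton_iff] at hab
  rw [Finset.mem_coe] at ha hb
  have hne : (v, w) ≠ (a, b) := fun h => hab.2 (by simp [Prod.mk.inj h])
  have hpos : (1 : ℤ) ≤ G.mul a b := by exact_mod_cast (hab.1 : 0 < G.mul a b)
  have hsub : {(v, w), (a, b)} ⊆ A ×ˢ Aᶜ := by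
    simp [Finset.insert_subset_iff, hv, hw, ha, hb]
  calc (G.mul v w : ℤ) + 1
      ≤ ∑ p ∈ {(v, w), (a, b)}, (G.mul p.1 p.2 : ℤ) := by
        rw [Finset.sum_pair hne]; linarith
    _ ≤ G.cut A :=
        Finset.sum_le_sum_of_subset_of_nonneg hsub fun _ _ _ => Int.natCast_nonneg _

end Multigraph

open Multigraph in
/-- If the underlying simple graph of a connected multigraph `G` contains a
cycle, and `v`, `w` are adjacent vertices on that cycle with `a = |E(v,w)|` edges between
them in `G`, then the divisor `a·v` is not linearly equivalent to the divisor `a·w`. -/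
theorem cycle_divisors_not_equiv
    {V : Type} [Fintype V] (G : Multigraph V) (hG : G.Connected)
    (x v w : V) (c : G.underlying.Walk x x) (hc : c.IsCycle)
    (hvw : s(v, w) ∈ c.edges) :
    ¬ G.LinEquiv (fun u => if u = v then (G.mul v w : ℤ) else 0)
        (fun u => if u = w then (G.mul v w : ℤ) else 0) := by
  intro hequiv
  obtain ⟨σ, hσ⟩ := hequiv.exists_laplacian_eq
  have hadj : G.underlying.Adj v w := G.underlying.mem_edgeSet.1 (c.edges_subset_edgeSet hvw)
  have hpos : (0 : ℤ) < G.mul v w := by exact_mod_cast (hadj : 0 < G.mul v w)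
  have : Nonempty V := ⟨v⟩
  obtain ⟨u₀, hu₀⟩ := Finite.exists_max σ
  set A : Finset V := {u | ∀ t, σ t ≤ σ u}
  have hmax : ∀ u ∈ A, ∀ t, σ t ≤ σ u := fun u hu => (Finset.mem_filter.1 hu).2
  have hlt : ∀ u ∈ A, ∀ t ∉ A, σ t < σ u := fun u hu t ht => by
    by_contra! hle
    exact ht (Finset.mem_filter.2 ⟨Finset.mem_univ t, fun s => (hmax u hu s).trans hle⟩)
  have hcut : G.cut A ≤
      (if v ∈ A then (G.mul v w : ℤ) else 0) - if w ∈ A then (G.mul v w : ℤ) else 0 := by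
    simpa only [hσ, Finset.sum_sub_distrib, Finset.sum_ite_eq'] using
      cut_le_sum_laplacian (G := G) hmax hlt
  have hw : w ∉ A := fun hw => by
    have := laplacian_nonneg_of_forall_le (G := G) (hmax w hw)
    rw [hσ w, if_neg hadj.ne.symm, if_pos rfl] at this
    linarith
  have hv : v ∈ A := by
    by_contra hv
    have := one_le_cut hG (Finset.mem_filter.2 ⟨Finset.mem_univ u₀, hu₀⟩) hw
    rw [if_neg hv, if_neg hw] at hcut
    linarith
  have := mul_add_one_le_cut_of_mem_cycle hc hvw hv hw
  rw [if_pos hv, if_neg hw] at hcut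
  linarith
end
end
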